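/- Let $n \geq 1$, $(\bar c_{ij})$ symmetric nonnegative, $c^* > 0$, $v \in (\mathbb{R}_{>0})^n$, and $g \in \mathbb{R}^n$. Then the linear system $g + (c^* I + \bar A(v)) J = 0$ has a unique solution $J$, given by $J = -B(v)^{-1} M(v)^{-1} g$ where $B(v) = c^* M^{-1}(v) + M^{-1}(v)\bar A(v)$ is symmetric positive definite. -/

import Mathlib

/-!
Right-multiplying by `M = diag v` turns `Ā` into a weighted graph Laplacian: `Ā M = L_w` with
weights `w i j = c̄ i j * v i * v j`. Its quadratic form is `½ ∑ w i j (x i - x j)²`, so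
`M⁻¹ Ā = M⁻¹ L_w M⁻¹` is positive semidefinite and `B = c* M⁻¹ + M⁻¹ Ā` is positive definite.
Hence `c* I + Ā = M B` is invertible with inverse `B⁻¹ M⁻¹`, which solves the linear system.
-/

open Matrix Finset

namespace Matrix

variable {n R : Type*} [Fintype n] [DecidableEq n]

theorem add_mulVec_eq_zero_iff [CommRing R] {S : Matrix n n R} (hS : IsUnit S) (g x : n → R) :
    g + S *ᵥ x = 0 ↔ x = -(S⁻¹ *ᵥ g) := by
  have hdet := (isUnit_iff_isUnit_det S).mp hS
  rw [add_comm, add_eq_zero_iff_eq_neg, ← mulVec_neg]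
  constructor
  · rintro h
    rw [← h, mulVec_mulVec, nonsing_inv_mul _ hdet, one_mulVec]
  · rintro rfl
    rw [mulVec_mulVec, mul_nonsing_inv _ hdet, one_mulVec]

theorem inv_diagonal_of_ne_zero {K : Type*} [Field K] {v : n → K} (hv : ∀ i, v i ≠ 0) :
    (diagonal v)⁻¹ = diagonal fun i => (v i)⁻¹ :=
  inv_eq_right_inv <| by simp [diagonal_mul_diagonal, hv]

section Laplacian

variable [CommRing R]

def weightedLaplacian (w : Matrix n n R) : Matrix n n R :=
  diagonal (fun i => ∑ j, w i j) - w

theorem weightedLaplacian_mulVec (w : Matrix n n R) (x : n → R) (i : n) :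
    (weightedLaplacian w *ᵥ x) i = ∑ j, w i j * (x i - x j) := by
  rw [weightedLaplacian, sub_mulVec, Pi.sub_apply, mulVec_diagonal]
  simp only [mulVec, dotProduct, Finset.sum_mul, mul_sub, Finset.sum_sub_distrib]

theorem two_mul_dotProduct_weightedLaplacian_mulVec {w : Matrix n n R} (hw : w.IsSymm)
    (x : n → R) :
    2 * (x ⬝ᵥ (weightedLaplacian w *ᵥ x)) = ∑ i, ∑ j, w i j * (x i - x j) ^ 2 := by
  have hform : x ⬝ᵥ (weightedLaplacian w *ᵥ x) = ∑ i, ∑ j, w i j * x i * (x i - x j) := by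
    simp only [dotProduct, weightedLaplacian_mulVec, Finset.mul_sum]
    exact Fintype.sum_congr _ _ fun i => Fintype.sum_congr _ _ fun j => by ring
  have hswap : ∑ i, ∑ j, w i j * x i * (x i - x j) = ∑ i, ∑ j, w i j * x j * (x j - x i) := by
    rw [Finset.sum_comm]
    exact Fintype.sum_congr _ _ fun i => Fintype.sum_congr _ _ fun j => by rw [hw.apply j i]
  rw [hform, two_mul]
  nth_rw 2 [hswap]
  simp only [← Finset.sum_add_distrib]
  exact Fintype.sum_congr _ _ fun i => Fintype.sum_congr _ _ fun j => by ring

theorem isSymm_weightedLaplacian {w : Matrix n n R} (hw : w.IsSymm) :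
    (weightedLaplacian w).IsSymm := by
  rw [IsSymm, weightedLaplacian, transpose_sub, diagonal_transpose, hw.eq]

theorem posSemidef_weightedLaplacian [LinearOrder R] [IsStrictOrderedRing R] [StarRing R]
    [TrivialStar R] {w : Matrix n n R} (hw : w.IsSymm) (hw0 : ∀ i j, i ≠ j → 0 ≤ w i j) :
    (weightedLaplacian w).PosSemidef := by
  refine .of_dotProduct_mulVec_nonneg
    (isHermitian_iff_isSymm.mpr (isSymm_weightedLaplacian hw)) fun x => ?_
  rw [star_trivial]
  suffices 0 ≤ 2 * (x ⬝ᵥ (weightedLaplacian w *ᵥ x)) by linarith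
  rw [two_mul_dotProduct_weightedLaplacian_mulVec hw]
  refine Finset.sum_nonneg fun i _ => Finset.sum_nonneg fun j _ => ?_
  obtain rfl | hij := eq_or_ne i j
  · simp
  · exact mul_nonneg (hw0 i j hij) (sq_nonneg _)

end Laplacian

end Matrix

section Flux

variable {n R : Type*} [Fintype n] [DecidableEq n]

/-- The matrix `Ā(v)` of the finite volume scheme. -/
def fluxMatrix [CommRing R] (c : n → n → R) (v : n → R) : Matrix n n R :=
  of fun i j => if i = j then ∑ k, (if k = i then 0 else c i k * v k) else -(c i j * v i)

theorem fluxMatrix_mul_diagonal [CommRing R] (c : n → n → R) (v : n → R) :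
    fluxMatrix c v * diagonal v = weightedLaplacian (of fun i j => c i j * v i * v j) := by
  ext i j
  rw [mul_diagonal]
  obtain rfl | hij := eq_or_ne i j
  · simp only [fluxMatrix, weightedLaplacian, of_apply, Matrix.sub_apply, diagonal_apply_eq, sum_ite,
      sum_const_zero, zero_add, filter_ne', mem_univ, sum_erase_eq_sub, ↓reduceIte]
    rw [sub_mul, Finset.sum_mul]
    congr 1
    exact Fintype.sum_congr _ _ fun j => by ring
  · simp [fluxMatrix, weightedLaplacian, hij]

theorem posSemidef_diagonal_inv_mul_fluxMatrix {c : n → n → ℝ}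
    (hc0 : ∀ i j, i ≠ j → 0 ≤ c i j) (hcs : ∀ i j, c i j = c j i) {v : n → ℝ}
    (hv : ∀ i, 0 < v i) :
    ((diagonal v)⁻¹ * fluxMatrix c v).PosSemidef := by
  have hL : (weightedLaplacian (of fun i j => c i j * v i * v j)).PosSemidef := by
    refine posSemidef_weightedLaplacian ?_ fun i j hij => ?_
    · ext i j
      simp only [transpose_apply, of_apply, hcs i j]
      ring
    · exact mul_nonneg (mul_nonneg (hc0 i j hij) (hv i).le) (hv j).le
  set D : Matrix n n ℝ := diagonal fun i => (v i)⁻¹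
  have hvD : diagonal v * D = 1 := by simp [D, diagonal_mul_diagonal, (hv _).ne']
  have hflux : fluxMatrix c v = weightedLaplacian (of fun i j => c i j * v i * v j) * D := by
    rw [← fluxMatrix_mul_diagonal, Matrix.mul_assoc, hvD, Matrix.mul_one]
  have hD : Dᴴ = D := by simp only [D, diagonal_conjTranspose, star_trivial]
  have hDLD := hL.conjTranspose_mul_mul_same D
  rw [hD, Matrix.mul_assoc, ← hflux] at hDLD
  rwa [inv_diagonal_of_ne_zero fun i => (hv i).ne']

theorem posDef_smul_inv_add_inv_mul_fluxMatrix {c : n → n → ℝ}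
    (hc0 : ∀ i j, i ≠ j → 0 ≤ c i j) (hcs : ∀ i j, c i j = c j i) {cstar : ℝ} (hcstar : 0 < cstar)
    {v : n → ℝ} (hv : ∀ i, 0 < v i) :
    (cstar • (diagonal v)⁻¹ + (diagonal v)⁻¹ * fluxMatrix c v).PosDef := by
  refine PosDef.add_posSemidef (PosDef.smul ?_ hcstar)
    (posSemidef_diagonal_inv_mul_fluxMatrix hc0 hcs hv)
  rw [inv_diagonal_of_ne_zero fun i => (hv i).ne']
  exact PosDef.diagonal fun i => inv_pos.mpr (hv i)

end Flux

theorem unique_flux_solution_general (n : ℕ) (c : Fin n → Fin n → ℝ)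
    (hc0 : ∀ i j, i ≠ j → 0 ≤ c i j) (hcs : ∀ i j, c i j = c j i)
    (cstar : ℝ) (hcstar : 0 < cstar)
    (v : Fin n → ℝ) (hv : ∀ i, 0 < v i) (g : Fin n → ℝ) :
    let M : Matrix (Fin n) (Fin n) ℝ := Matrix.diagonal v
    let Abar : Matrix (Fin n) (Fin n) ℝ := Matrix.of fun i j =>
      if i = j then ∑ k, (if k = i then 0 else c i k * v k) else -(c i j * v i)
    let B : Matrix (Fin n) (Fin n) ℝ := cstar • M⁻¹ + M⁻¹ * Abar
    B.PosDef ∧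
    ∀ J : Fin n → ℝ,
      g + (cstar • (1 : Matrix (Fin n) (Fin n) ℝ) + Abar).mulVec J = 0 ↔
        J = -(B⁻¹.mulVec (M⁻¹.mulVec g)) := by
  intro M Abar B
  have hB : B.PosDef := posDef_smul_inv_add_inv_mul_fluxMatrix hc0 hcs hcstar hv
  have hM : IsUnit M := isUnit_diagonal.mpr (Pi.isUnit_iff.mpr fun i => (hv i).ne'.isUnit)
  have hMB : M * B = cstar • 1 + Abar := by
    rw [Matrix.mul_add, Matrix.mul_smul, ← Matrix.mul_assoc,
      mul_nonsing_inv M ((isUnit_iff_isUnit_det M).mp hM), Matrix.one_mul]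
  refine ⟨hB, fun J => ?_⟩
  rw [← hMB, add_mulVec_eq_zero_iff (hM.mul hB.isUnit), Matrix.mul_inv_rev, ← mulVec_mulVec]

theorem unique_flux_solution (n : ℕ) (hn : 1 ≤ n) (c : Fin n → Fin n → ℝ)
    (hc0 : ∀ i j, i ≠ j → 0 ≤ c i j) (hcs : ∀ i j, c i j = c j i)
    (cstar : ℝ) (hcstar : 0 < cstar)
    (v : Fin n → ℝ) (hv : ∀ i, 0 < v i) (g : Fin n → ℝ) :
    let M : Matrix (Fin n) (Fin n) ℝ := Matrix.diagonal v
    let Abar : Matrix (Fin n) (Fin n) ℝ := Matrix.of fun i j =>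
      if i = j then ∑ k, (if k = i then 0 else c i k * v k) else -(c i j * v i)
    let B : Matrix (Fin n) (Fin n) ℝ := cstar • M⁻¹ + M⁻¹ * Abar
    B.PosDef ∧
    ∀ J : Fin n → ℝ,
      g + (cstar • (1 : Matrix (Fin n) (Fin n) ℝ) + Abar).mulVec J = 0 ↔
        J = -(B⁻¹.mulVec (M⁻¹.mulVec g)) :=
  unique_flux_solution_general n c hc0 hcs cstar hcstar v hv g
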